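/- arXiv:hep-th/9808158 — 9 statements merged into one kernel-verified Lean document; each statement's English description precedes it below -/
import Mathlib

section
/- Let n ≥ 2 and let x_1, ..., x_m be integers, none divisible by n, satisfying x_1 + ... + x_m ≡ δn (mod 2n) with δ ∈ {0,1}. Then ε_n(x_1)·ε_n(x_2)···ε_n(x_m) = (-1)^δ if and only if ⟨x_1⟩_n + ⟨x_2⟩_n + ... + ⟨x_m⟩_n ≡ 0 (mod 2n), and the product equals -(-1)^δ if and only if the sum of residues is ≡ n (mod 2n). -/
/-- The su(2) parity function: `0` if `n ∣ a`, `+1` if the residue of `a`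
modulo `2n` (in `[0, 2n-1]`) is less than `n`, and `-1` otherwise. -/
def suTwoParity (n a : ℤ) : ℤ :=
  if n ∣ a then 0 else if a % (2 * n) < n then 1 else -1

lemma prod_pm (m : ℕ) (e : Fin m → ℤ) (he : ∀ i, e i = 1 ∨ e i = -1) :
    ∃ k : ℕ, (∏ i, e i) = (-1) ^ k ∧ (∑ i, e i) = (m : ℤ) - 2 * k := by
  induction m with
  | zero => exact ⟨0, by simp⟩
  | succ m ih =>
    obtain ⟨k, hp, hs⟩ := ih (fun i => e i.succ) (fun i => he i.succ)
    rcases he 0 with h | h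
    · refine ⟨k, ?_, ?_⟩
      · rw [Fin.prod_univ_succ, h, one_mul, hp]
      · rw [Fin.sum_univ_succ, h, hs]; push_cast; ring
    · refine ⟨k + 1, ?_, ?_⟩
      · rw [Fin.prod_univ_succ, h, hp, pow_succ]; ring
      · rw [Fin.sum_univ_succ, h, hs]; push_cast; ring

theorem parity_product_lemma (n : ℤ) (hn : 2 ≤ n) (m : ℕ) (x : Fin m → ℤ)
    (hx : ∀ i, ¬ n ∣ x i) (δ : ℕ) (hδ : δ = 0 ∨ δ = 1)
    (hsum : (∑ i, x i) % (2 * n) = ((δ : ℤ) * n) % (2 * n)) :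
    ((∏ i, suTwoParity n (x i) = (-1) ^ δ) ↔ (∑ i, x i % n) % (2 * n) = 0) ∧
    ((∏ i, suTwoParity n (x i) = -(-1) ^ δ) ↔ (∑ i, x i % n) % (2 * n) = n) := by
  have hn0 : (0:ℤ) < n := by linarith
  have h2n : (0:ℤ) < 2 * n := by linarith
  set e : Fin m → ℤ := fun i => suTwoParity n (x i) with he_def
  have he : ∀ i, e i = 1 ∨ e i = -1 := by
    intro i
    simp only [he_def, suTwoParity, if_neg (hx i)]
    split_ifs <;> simp
  obtain ⟨k, hp, hs⟩ := prod_pm m e he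
  have key : ∀ i, 2 * (x i % n) = 2 * (x i % (2 * n)) - n * (1 - e i) := by
    intro i
    have hmod : x i % n = (x i % (2 * n)) % n :=
      (Int.emod_emod_of_dvd _ ⟨2, by ring⟩).symm
    have h0 : 0 ≤ x i % (2 * n) := Int.emod_nonneg _ (by linarith)
    have h1 : x i % (2 * n) < 2 * n := Int.emod_lt_of_pos _ h2n
    simp only [he_def, suTwoParity, if_neg (hx i)]
    split_ifs with h
    · rw [hmod, Int.emod_eq_of_lt h0 h]; ring
    · push_neg at h
      have h2 : x i % (2 * n) % n = x i % (2 * n) - n := by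
        rw [Int.emod_eq_sub_self_emod, Int.emod_eq_of_lt (by linarith) (by linarith)]
      rw [hmod, h2]; ring
  have hS : (∑ i, x i % n) = (∑ i, x i % (2 * n)) - n * k := by
    have h1 : ∑ i, 2 * (x i % n) = ∑ i, (2 * (x i % (2 * n)) - n * (1 - e i)) :=
      Finset.sum_congr rfl (fun i _ => key i)
    have h2 : (2:ℤ) * ∑ i, x i % n = 2 * (∑ i, x i % (2 * n)) - n * ((m : ℤ) - ∑ i, e i) := by
      rw [Finset.mul_sum, h1, Finset.sum_sub_distrib, ← Finset.mul_sum, ← Finset.mul_sum,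
        Finset.sum_sub_distrib, Finset.sum_const, Finset.card_univ, Fintype.card_fin]
      simp [mul_sub]
    rw [hs] at h2
    linarith
  have hT : (∑ i, x i % (2 * n)) % (2 * n) = ((δ : ℤ) * n) % (2 * n) := by
    rw [← Finset.sum_int_mod, hsum]
  have hSmod : (∑ i, x i % n) % (2 * n) = (((δ : ℤ) - k) * n) % (2 * n) := by
    rw [hS, Int.sub_emod, hT, ← Int.sub_emod]
    ring_nf
  rw [hp]
  rcases Int.even_or_odd ((δ : ℤ) - k) with ⟨c, hc⟩ | ⟨c, hc⟩
  · have hz : (∑ i, x i % n) % (2 * n) = 0 := by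
      rw [hSmod, hc]
      have : (c + c) * n = (2 * n) * c := by ring
      rw [this, Int.mul_emod_right]
    have hpk : ((-1:ℤ)) ^ k = (-1) ^ δ := by
      rcases hδ with rfl | rfl
      · have : Even k := by
          rcases Int.even_or_odd k with hk | hk
          · exact Int.even_coe_nat k |>.mp hk
          · exfalso; rcases hk with ⟨d, hd⟩; omega
        simpa using this.neg_one_pow
      · have : Odd k := by
          rcases Int.even_or_odd k with hk | hk
          · exfalso; rcases hk with ⟨d, hd⟩; omega
          · rcases hk with ⟨d, hd⟩
            refine ⟨d.toNat, ?_⟩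
            omega
        rw [this.neg_one_pow]; simp
    have hne : ((-1:ℤ)) ^ δ ≠ -(-1) ^ δ := by
      rcases hδ with rfl | rfl <;> norm_num
    constructor
    · rw [hpk]; simp [hz]
    · rw [hpk, hz]
      exact ⟨fun h => absurd h hne, fun h => absurd h (by omega)⟩
  · have hz : (∑ i, x i % n) % (2 * n) = n := by
      rw [hSmod, hc]
      have : (2 * c + 1) * n = n + (2 * n) * c := by ring
      rw [this, Int.add_mul_emod_self_left, Int.emod_eq_of_lt (by linarith) (by linarith)]
    have hpk : ((-1:ℤ)) ^ k = -(-1) ^ δ := by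
      rcases hδ with rfl | rfl
      · have : Odd k := by
          rcases Int.even_or_odd k with hk | hk
          · exfalso; rcases hk with ⟨d, hd⟩; omega
          · rcases hk with ⟨d, hd⟩
            refine ⟨d.toNat, ?_⟩
            omega
        rw [this.neg_one_pow]; simp
      · have : Even k := by
          rcases Int.even_or_odd k with hk | hk
          · exact Int.even_coe_nat k |>.mp hk
          · exfalso; rcases hk with ⟨d, hd⟩; omega
        rw [this.neg_one_pow]; simp
    have hne : ((-1:ℤ)) ^ δ ≠ -(-1) ^ δ := by
      rcases hδ with rfl | rfl <;> norm_num
    constructor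
    · rw [hpk, hz]
      exact ⟨fun h => absurd h.symm hne, fun h => absurd h (by omega)⟩
    · rw [hpk]; simp [hz]
end

section
/- Let n ≥ 3 and let a, b be integers such that none of a, b, a+b is divisible by n. Then ε_n(a)·ε_n(b)·ε_n(a+b) = +1 if and only if ⟨a⟩_n + ⟨b⟩_n + ⟨n-a-b⟩_n = n, and ε_n(a)·ε_n(b)·ε_n(a+b) = -1 if and only if ⟨a⟩_n + ⟨b⟩_n + ⟨n-a-b⟩_n = 2n. -/
private lemma dvd_band (n s : ℤ) (hn : 0 < n) (h : n ∣ s) (h1 : 0 < s) (h2 : s < 2 * n) :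
    s = n := by
  obtain ⟨k, rfl⟩ := h
  have hk1 : 0 < k := by nlinarith
  have hk2 : k < 2 := by nlinarith
  have : k = 1 := by omega
  simp [this]

private lemma emod_pos (n x : ℤ) (hn : 0 < n) (hx : ¬ n ∣ x) :
    0 < x % n ∧ x % n < n := by
  have h1 : 0 ≤ x % n := Int.emod_nonneg x (by omega)
  have h2 : x % n < n := Int.emod_lt_of_pos x hn
  have h3 : x % n ≠ 0 := fun h => hx (Int.dvd_iff_emod_eq_zero.mpr h)
  omega

private lemma neg_emod_eq (n x : ℤ) (hn : 0 < n) (hx : ¬ n ∣ x) :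
    (-x) % n = n - x % n := by
  have hxx := emod_pos n x hn hx
  have hnx : ¬ n ∣ (-x) := fun h => hx (dvd_neg.mp h)
  have hnn := emod_pos n (-x) hn hnx
  have key : n ∣ ((-x) % n + x % n) := by
    have : ((-x) % n + x % n) % n = 0 := by
      rw [← Int.add_emod]; simp
    exact Int.dvd_iff_emod_eq_zero.mpr this
  have := dvd_band n _ hn key (by omega) (by omega)
  omega

private lemma par (n a : ℤ) (hn : 0 < n) (ha : ¬ n ∣ a) :
    suTwoParity n a = if Even (a / n) then 1 else -1 := by
  have hra := emod_pos n a hn ha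
  have heq := Int.mul_ediv_add_emod a n
  unfold suTwoParity
  rw [if_neg ha]
  rcases Int.even_or_odd (a / n) with ⟨k, hk⟩ | ⟨k, hk⟩
  · have hab2 : a = a % n + 2 * n * k := by rw [hk] at heq; linear_combination -heq
    have h2 : a % (2 * n) = a % n := by
      conv_lhs => rw [hab2]
      rw [Int.add_mul_emod_self_left, Int.emod_eq_of_lt (by omega) (by omega)]
    rw [h2, if_pos (by omega), if_pos ⟨k, hk⟩]
  · have hab2 : a = (n + a % n) + 2 * n * k := by rw [hk] at heq; linear_combination -heq
    have h2 : a % (2 * n) = n + a % n := by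
      conv_lhs => rw [hab2]
      rw [Int.add_mul_emod_self_left, Int.emod_eq_of_lt (by omega) (by omega)]
    rw [h2, if_neg (by omega),
      if_neg (by simp only [hk, Int.even_iff]; omega)]

theorem su3_additive_parity (n a b : ℤ) (hn : 3 ≤ n)
    (ha : ¬ n ∣ a) (hb : ¬ n ∣ b) (hab : ¬ n ∣ (a + b)) :
    (suTwoParity n a * suTwoParity n b * suTwoParity n (a + b) = 1 ↔
      a % n + b % n + (n - a - b) % n = n) ∧
    (suTwoParity n a * suTwoParity n b * suTwoParity n (a + b) = -1 ↔
      a % n + b % n + (n - a - b) % n = 2 * n) := by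
  have hn0 : 0 < n := by omega
  have hra := emod_pos n a hn0 ha
  have hrb := emod_pos n b hn0 hb
  have hrc := emod_pos n (a + b) hn0 hab
  have hrd : (n - a - b) % n = n - (a + b) % n := by
    have h1 : (n - a - b) % n = (-(a + b)) % n := by
      have h : n - a - b = (-(a+b)) + n * 1 := by ring
      rw [h, Int.add_mul_emod_self_left]
    rw [h1, neg_emod_eq n (a + b) hn0 hab]
  have e1 := Int.mul_ediv_add_emod a n
  have e2 := Int.mul_ediv_add_emod b n
  have e3 := Int.mul_ediv_add_emod (a + b) n
  have hdvd : n ∣ (a % n + b % n - (a + b) % n) :=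
    ⟨(a + b) / n - a / n - b / n, by linear_combination e1 + e2 - e3⟩
  have hcase : a % n + b % n - (a + b) % n = 0 ∨ a % n + b % n - (a + b) % n = n := by
    obtain ⟨k, hk⟩ := hdvd
    have hk1 : 0 ≤ k := by nlinarith
    have hk2 : k < 2 := by nlinarith
    interval_cases k <;> omega
  rw [par n a hn0 ha, par n b hn0 hb, par n (a + b) hn0 hab]
  rcases hcase with hc | hc
  · have hq : (a + b) / n = a / n + b / n := by
      have h : n * ((a + b) / n) = n * (a / n + b / n) := by linear_combination e3 - e1 - e2 + hc
      exact mul_left_cancel₀ (by omega) h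
    by_cases hea : Even (a / n) <;> by_cases heb : Even (b / n) <;>
      simp [hea, heb, hq, Int.even_add] <;> omega
  · have hq : (a + b) / n = a / n + b / n + 1 := by
      have h : n * ((a + b) / n) = n * (a / n + b / n + 1) := by
        linear_combination e3 - e1 - e2 + hc
      exact mul_left_cancel₀ (by omega) h
    by_cases hea : Even (a / n) <;> by_cases heb : Even (b / n) <;>
      simp [hea, heb, hq, Int.even_add, parity_simps] <;> omega
end

section
/- Let n ≥ 3 be an integer and a, b integers (so that p = (a,b,a) is a self-conjugate su(4) weight) such that a, b, 2a+b are not divisible by n. Then ε_n(a)²·ε_n(b)·ε_n(2a+b) = +1 if and only if 2⟨a⟩_n + ⟨b⟩_n + ⟨n-2a-b⟩_n ≡ n (mod 2n). -/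
lemma suTwo_aux (n d : ℤ) (hn : 0 < n) (hd : n ∣ d) (h1 : -n < d) (h2 : d < 2 * n) :
    d = 0 ∨ d = n := by
  obtain ⟨k, rfl⟩ := hd
  have hk0 : 0 ≤ k := by
    by_contra h
    push_neg at h
    have hk : k ≤ -1 := by omega
    nlinarith
  have hk2 : k < 2 := by
    by_contra h
    push_neg at h
    nlinarith
  interval_cases k
  · left; ring
  · right; ring

theorem su4_selfconjugate_additive_parity (n a b : ℤ) (hn : 3 ≤ n)
    (ha : ¬ n ∣ a) (hb : ¬ n ∣ b) (hab : ¬ n ∣ (2 * a + b)) :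
    (suTwoParity n a) ^ 2 * suTwoParity n b * suTwoParity n (2 * a + b) = 1 ↔
      (2 * (a % n) + b % n + (n - 2 * a - b) % n) % (2 * n) = n % (2 * n) := by
  have hn0 : (0:ℤ) < n := by omega
  have hra0 : 0 ≤ a % n := Int.emod_nonneg a (by omega)
  have hra1 : a % n < n := Int.emod_lt_of_pos a hn0
  have hrb0 : 0 ≤ b % n := Int.emod_nonneg b (by omega)
  have hrb1 : b % n < n := Int.emod_lt_of_pos b hn0
  have hrc0 : 0 ≤ (2*a+b) % n := Int.emod_nonneg _ (by omega)
  have hrc1 : (2*a+b) % n < n := Int.emod_lt_of_pos _ hn0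
  have hrt0 : 0 ≤ (n - 2*a - b) % n := Int.emod_nonneg _ (by omega)
  have hrt1 : (n - 2*a - b) % n < n := Int.emod_lt_of_pos _ hn0
  have hrcne : (2*a+b) % n ≠ 0 := fun h => hab (Int.dvd_of_emod_eq_zero h)
  have hB0 : 0 ≤ b % (2*n) := Int.emod_nonneg b (by omega)
  have hB1 : b % (2*n) < 2*n := Int.emod_lt_of_pos b (by omega)
  have hC0 : 0 ≤ (2*a+b) % (2*n) := Int.emod_nonneg _ (by omega)
  have hC1 : (2*a+b) % (2*n) < 2*n := Int.emod_lt_of_pos _ (by omega)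
  -- divisibility facts
  have d1 : n ∣ b - b % n := Int.dvd_self_sub_of_emod_eq rfl
  have d2 : (2*n) ∣ b - b % (2*n) := Int.dvd_self_sub_of_emod_eq rfl
  have d2' : n ∣ b - b % (2*n) := dvd_trans ⟨2, by ring⟩ d2
  have eb : b % (2*n) = b % n ∨ b % (2*n) = b % n + n := by
    have hd : n ∣ (b % (2*n) - b % n) := by
      have h : b % (2*n) - b % n = (b - b % n) - (b - b % (2*n)) := by ring
      rw [h]; exact dvd_sub d1 d2'
    rcases suTwo_aux n _ hn0 hd (by omega) (by omega) with h | h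
    · left; omega
    · right; omega
  have d3 : n ∣ (2*a+b) - (2*a+b) % n := Int.dvd_self_sub_of_emod_eq rfl
  have d4 : (2*n) ∣ (2*a+b) - (2*a+b) % (2*n) := Int.dvd_self_sub_of_emod_eq rfl
  have d4' : n ∣ (2*a+b) - (2*a+b) % (2*n) := dvd_trans ⟨2, by ring⟩ d4
  have ec : (2*a+b) % (2*n) = (2*a+b) % n ∨ (2*a+b) % (2*n) = (2*a+b) % n + n := by
    have hd : n ∣ ((2*a+b) % (2*n) - (2*a+b) % n) := by
      have h : (2*a+b) % (2*n) - (2*a+b) % n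
          = ((2*a+b) - (2*a+b) % n) - ((2*a+b) - (2*a+b) % (2*n)) := by ring
      rw [h]; exact dvd_sub d3 d4'
    rcases suTwo_aux n _ hn0 hd (by omega) (by omega) with h | h
    · left; omega
    · right; omega
  -- key 2n-divisibility
  obtain ⟨qa, hqa⟩ : n ∣ a - a % n := Int.dvd_self_sub_of_emod_eq rfl
  have hd2n : (2*n) ∣ (2*(a % n) + b % (2*n)) - (2*a+b) % (2*n) := by
    have h2a : (2*n) ∣ (2*a - 2*(a % n)) := ⟨qa, by linarith⟩
    have h : (2*(a % n) + b % (2*n)) - (2*a+b) % (2*n)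
        = ((2*a+b) - (2*a+b) % (2*n)) - (2*a - 2*(a % n)) - (b - b % (2*n)) := by ring
    rw [h]; exact dvd_sub (dvd_sub d4 h2a) d2
  -- t = n - rc
  have dt : n ∣ (n - 2*a - b) - (n - 2*a - b) % n := Int.dvd_self_sub_of_emod_eq rfl
  have htne : (n - 2*a - b) % n ≠ 0 := by
    intro h
    apply hab
    have h2 : n ∣ (n - 2*a - b) := Int.dvd_of_emod_eq_zero h
    have h3 : (2*a+b) = n - (n - 2*a - b) := by ring
    rw [h3]; exact dvd_sub (dvd_refl n) h2
  have ht : (n - 2*a - b) % n = n - (2*a+b) % n := by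
    have hsum : n ∣ ((n - 2*a - b) % n + (2*a+b) % n) := by
      have h : (n - 2*a - b) % n + (2*a+b) % n
          = n - ((n - 2*a - b) - (n - 2*a - b) % n) - ((2*a+b) - (2*a+b) % n) := by ring
      rw [h]; exact dvd_sub (dvd_sub (dvd_refl n) dt) d3
    rcases suTwo_aux n _ hn0 hsum (by omega) (by omega) with h | h
    · omega
    · omega
  -- rewrite the goal
  simp only [suTwoParity, if_neg ha, if_neg hb, if_neg hab]
  rw [ht]
  have sq : (if a % (2*n) < n then (1:ℤ) else -1) ^ 2 = 1 := by split <;> norm_num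
  rw [sq, one_mul]
  have hrhs : (2*(a % n) + b % n + (n - (2*a+b) % n)) % (2*n) = n % (2*n) ↔
      (2*n) ∣ (2*(a % n) + b % n - (2*a+b) % n) := by
    constructor
    · intro h
      have h2 : (2*n) ∣ (n - (2*(a % n) + b % n + (n - (2*a+b) % n))) := Int.ModEq.dvd h
      have h3 : (2*(a % n) + b % n - (2*a+b) % n)
          = -(n - (2*(a % n) + b % n + (n - (2*a+b) % n))) := by ring
      rw [h3]; exact dvd_neg.2 h2
    · intro h
      refine Int.modEq_iff_dvd.2 ?_
      have h3 : n - (2*(a % n) + b % n + (n - (2*a+b) % n))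
          = -(2*(a % n) + b % n - (2*a+b) % n) := by ring
      rw [h3]; exact dvd_neg.2 h
  rw [hrhs]
  have hdvdn : ¬ (2*n) ∣ n := by
    intro h
    have := Int.le_of_dvd hn0 h
    omega
  rcases eb with hBe | hBe <;> rcases ec with hCe | hCe <;> rw [hBe, hCe] at hd2n ⊢
  · rw [if_pos (by omega), if_pos (by omega)]
    exact iff_of_true (by norm_num) hd2n
  · rw [if_pos (by omega), if_neg (by omega)]
    refine iff_of_false (by norm_num) ?_
    intro h
    apply hdvdn
    have h4 := dvd_sub h hd2n
    have h3 : (2*(a % n) + b % n - (2*a+b) % n)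
        - (2*(a % n) + b % n - ((2*a+b) % n + n)) = n := by ring
    rwa [h3] at h4
  · rw [if_neg (by omega), if_pos (by omega)]
    refine iff_of_false (by norm_num) ?_
    intro h
    apply hdvdn
    have h4 := dvd_sub hd2n h
    have h3 : (2*(a % n) + (b % n + n) - (2*a+b) % n)
        - (2*(a % n) + b % n - (2*a+b) % n) = n := by ring
    rwa [h3] at h4
  · rw [if_neg (by omega), if_neg (by omega)]
    refine iff_of_true (by norm_num) ?_
    have h3 : (2*(a % n) + b % n - (2*a+b) % n)
        = (2*(a % n) + (b % n + n) - ((2*a+b) % n + n)) := by ring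
    rw [h3]; exact hd2n
end

section
/- Let n ≥ 2 be even, let d be an even divisor of n, let a be an integer with 1 ≤ a ≤ d-1, and let h be coprime to n. Then ε_n(hn/2) · ε_n(had) · ∏_{j=0}^{d-1} ε_n(ha + hjn/d) = +1, provided none of the arguments is divisible by n. -/
lemma aux_ediv_ediv (a : ℤ) {b c : ℤ} (hb : 0 < b) (hc : 0 < c) :
    a / b / c = a / (b * c) := by
  have h1 := Int.mul_ediv_add_emod a b
  have h2 := Int.mul_ediv_add_emod (a / b) c
  have hr0 : 0 ≤ a % b := Int.emod_nonneg a hb.ne'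
  have hr0' : a % b < b := Int.emod_lt_of_pos a hb
  have hr1 : 0 ≤ (a / b) % c := Int.emod_nonneg _ hc.ne'
  have hr1' : (a / b) % c < c := Int.emod_lt_of_pos _ hc
  have hbc : (0 : ℤ) < b * c := mul_pos hb hc
  have ha : a = (b * ((a / b) % c) + a % b) + (a / b / c) * (b * c) := by
    linear_combination -h1 - b * h2
  have hz : (b * ((a / b) % c) + a % b) / (b * c) = 0 := by
    apply Int.ediv_eq_zero_of_lt
    · positivity
    · nlinarith
  symm
  nth_rewrite 1 [ha]
  rw [Int.add_mul_ediv_right _ _ hbc.ne', hz, zero_add]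

lemma suTwoParity_eq_negOnePow (n x : ℤ) (hn : 0 < n) (hx : ¬ n ∣ x) :
    suTwoParity n x = ((x / n).negOnePow : ℤ) := by
  have hxn0 : 0 ≤ x % n := Int.emod_nonneg x hn.ne'
  have hxn1 : x % n < n := Int.emod_lt_of_pos x hn
  have hkey : x % (2 * n) = n * ((x / n) % 2) + x % n := by
    have e1 : x / n / 2 = x / (n * 2) := aux_ediv_ediv x hn two_pos
    have d1 := Int.mul_ediv_add_emod x n
    have d2 := Int.mul_ediv_add_emod x (n * 2)
    have d3 := Int.mul_ediv_add_emod (x / n) 2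
    rw [show (2 : ℤ) * n = n * 2 by ring]
    linear_combination d2 - d1 - n * d3 + 2 * n * e1
  have hb : (x / n) % 2 = 0 ∨ (x / n) % 2 = 1 := Int.emod_two_eq _
  unfold suTwoParity
  rw [if_neg hx]
  rcases hb with hb | hb
  · have heven : Even (x / n) := Int.even_iff.mpr hb
    rw [Int.negOnePow_even _ heven, if_pos]
    · rfl
    · rw [hkey, hb]; linarith
  · have hodd : Odd (x / n) := Int.odd_iff.mpr hb
    rw [Int.negOnePow_odd _ hodd, if_neg]
    · rfl
    · rw [hkey, hb]; push_neg; linarith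

lemma sum_emod_perm (d c y : ℤ) (hd : 0 < d) (hc : IsCoprime c d) :
    ∑ j ∈ Finset.range d.toNat, ((c * (j : ℤ) + y) % d)
      = ∑ j ∈ Finset.range d.toNat, ((j : ℤ)) := by
  obtain ⟨u, v, huv⟩ := hc
  have hmem : ∀ z : ℤ, (z % d).toNat ∈ Finset.range d.toNat := by
    intro z
    have h1 : 0 ≤ z % d := Int.emod_nonneg z hd.ne'
    have h2 : z % d < d := Int.emod_lt_of_pos z hd
    simp only [Finset.mem_range]
    omega
  refine Finset.sum_nbij' (i := fun j : ℕ => ((c * (j : ℤ) + y) % d).toNat)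
    (j := fun k : ℕ => ((u * ((k : ℤ) - y)) % d).toNat)
    (fun j _ => hmem _) (fun k _ => hmem _) ?_ ?_ ?_
  · intro j hj
    simp only [Finset.mem_range] at hj
    have hjd : (j : ℤ) < d := by omega
    have h1 : 0 ≤ (c * (j : ℤ) + y) % d := Int.emod_nonneg _ hd.ne'
    rw [Int.toNat_of_nonneg h1]
    have hdvd : d ∣ u * ((c * (j : ℤ) + y) % d - y) - (j : ℤ) := by
      refine ⟨-(v * (j : ℤ)) - u * ((c * (j : ℤ) + y) / d), ?_⟩
      have hm := Int.emod_def (c * (j : ℤ) + y) d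
      linear_combination u * hm + (j : ℤ) * huv
    have : (u * ((c * (j : ℤ) + y) % d - y)) % d = (j : ℤ) % d := by
      obtain ⟨t, ht⟩ := hdvd
      have : u * ((c * (j : ℤ) + y) % d - y) = (j : ℤ) + d * t := by linarith
      rw [this, Int.add_mul_emod_self_left]
    rw [this, Int.emod_eq_of_lt (by positivity) hjd]
    omega
  · intro k hk
    simp only [Finset.mem_range] at hk
    have hkd : (k : ℤ) < d := by omega
    have h1 : 0 ≤ (u * ((k : ℤ) - y)) % d := Int.emod_nonneg _ hd.ne'
    rw [Int.toNat_of_nonneg h1]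
    have hdvd : d ∣ c * ((u * ((k : ℤ) - y)) % d) + y - (k : ℤ) := by
      refine ⟨-(v * ((k : ℤ) - y)) - c * ((u * ((k : ℤ) - y)) / d), ?_⟩
      have hm := Int.emod_def (u * ((k : ℤ) - y)) d
      linear_combination c * hm + ((k : ℤ) - y) * huv
    have : (c * ((u * ((k : ℤ) - y)) % d) + y) % d = (k : ℤ) % d := by
      obtain ⟨t, ht⟩ := hdvd
      have : c * ((u * ((k : ℤ) - y)) % d) + y = (k : ℤ) + d * t := by linarith
      rw [this, Int.add_mul_emod_self_left]
    rw [this, Int.emod_eq_of_lt (by positivity) hkd]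
    omega
  · intro j _
    exact (Int.toNat_of_nonneg (Int.emod_nonneg _ hd.ne')).symm

lemma prod_negOnePow {α : Type*} (s : Finset α) (f : α → ℤ) :
    ∏ i ∈ s, ((f i).negOnePow : ℤ) = (((∑ i ∈ s, f i).negOnePow : ℤˣ) : ℤ) := by
  induction s using Finset.cons_induction with
  | empty => simp
  | cons a s ha ih =>
      rw [Finset.prod_cons, Finset.sum_cons, Int.negOnePow_add, Units.val_mul, ih]

theorem parity_relation_R_even (n d : ℤ) (hn : 2 ≤ n) (hneven : Even n)
    (hdn : d ∣ n) (hdeven : Even d)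
    (a : ℤ) (ha : 1 ≤ a) (had : a ≤ d - 1)
    (h : ℤ) (hh : IsCoprime h n)
    (h0 : ¬ n ∣ h * (n / 2)) (h1 : ¬ n ∣ h * a * d)
    (h2 : ∀ j ∈ Finset.range d.toNat, ¬ n ∣ (h * a + h * j * (n / d))) :
    suTwoParity n (h * (n / 2)) * suTwoParity n (h * a * d) *
      ∏ j ∈ Finset.range d.toNat, suTwoParity n (h * a + h * j * (n / d)) = 1 := by
  have hd0 : 0 < d := by omega
  have hn0 : 0 < n := by omega
  obtain ⟨m, hm⟩ := hdn
  have hm0 : 0 < m := by nlinarith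
  have hnd : n / d = m := by rw [hm]; exact Int.mul_ediv_cancel_left _ hd0.ne'
  obtain ⟨k, hk⟩ := hneven
  have hk0 : 0 < k := by omega
  have hn2 : n / 2 = k := by omega
  -- h is odd
  have hodd : h % 2 = 1 := by
    obtain ⟨u, v, huv⟩ := hh
    rcases Int.even_or_odd h with he | ho
    · exfalso
      have h1 : Even (u * h) := he.mul_left u
      have hEn : Even n := ⟨k, hk⟩
      have h2 : Even (v * n) := hEn.mul_left v
      have : Even (1 : ℤ) := huv ▸ h1.add h2
      simp at this
    · exact Int.odd_iff.mp ho
  set p := h / 2 with hp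
  have hhp : h = 2 * p + 1 := by omega
  have hcd : IsCoprime h d := hh.of_isCoprime_of_dvd_right ⟨m, hm⟩
  -- compute the three kinds of quotients
  have e0 : h * (n / 2) / n = p := by
    rw [hn2, show n = k * 2 by omega, show h * k = k * h by ring,
      Int.mul_ediv_mul_of_pos _ _ hk0]
  set y := h * a / m with hy
  have e1 : h * a * d / n = y := by
    rw [hm, show h * a * d = d * (h * a) by ring, Int.mul_ediv_mul_of_pos _ _ hd0]
  have ej : ∀ j : ℕ, (h * a + h * (j : ℤ) * (n / d)) / n = (y + h * (j : ℤ)) / d := by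
    intro j
    rw [hnd, show n = m * d by linarith [hm], ← aux_ediv_ediv _ hm0 hd0,
      Int.add_mul_ediv_right _ _ hm0.ne']
  set N := d.toNat with hN
  have hNd : (N : ℤ) = d := Int.toNat_of_nonneg hd0.le
  have hN2 : 2 ≤ N := by omega
  -- Gauss sum
  have hT : 2 * (∑ j ∈ Finset.range N, (j : ℤ)) = d * (d - 1) := by
    have hg := Finset.sum_range_id_mul_two N
    have := congrArg (fun t : ℕ => (t : ℤ)) hg
    push_cast [Nat.cast_sub (by omega : 1 ≤ N)] at this
    rw [hNd] at this
    linarith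
  -- permutation sum
  have hperm : ∑ j ∈ Finset.range N, ((h * (j : ℤ) + y) % d)
      = ∑ j ∈ Finset.range N, ((j : ℤ)) := sum_emod_perm d h y hd0 hcd
  -- the main sum
  set S := ∑ j ∈ Finset.range N, ((y + h * (j : ℤ)) / d) with hS
  have hdS : d * S = (N : ℤ) * y + (h - 1) * (∑ j ∈ Finset.range N, (j : ℤ)) := by
    rw [hS, Finset.mul_sum]
    have : ∀ j ∈ Finset.range N, d * ((y + h * (j : ℤ)) / d)
        = (y + h * (j : ℤ)) - ((h * (j : ℤ) + y) % d) := by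
      intro j _
      have hd1 := Int.mul_ediv_add_emod (y + h * (j : ℤ)) d
      have : (y + h * (j : ℤ)) % d = (h * (j : ℤ) + y) % d := by ring_nf
      linarith
    rw [Finset.sum_congr rfl this, Finset.sum_sub_distrib, hperm, Finset.sum_add_distrib,
      Finset.sum_const, Finset.card_range, ← Finset.mul_sum]
    ring
  have hSval : 2 * S = 2 * y + 2 * p * (d - 1) := by
    have hcancel : d * (2 * S) = d * (2 * y + 2 * p * (d - 1)) := by
      have hds2 : 2 * (d * S) = 2 * ((N : ℤ) * y + (h - 1) * (∑ j ∈ Finset.range N, (j : ℤ))) := by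
        rw [hdS]
      rw [hNd] at hds2
      linear_combination hds2 + 2 * p * hT + 2 * (∑ j ∈ Finset.range N, (j : ℤ)) * hhp
    exact mul_left_cancel₀ hd0.ne' hcancel
  -- rewrite the goal
  rw [suTwoParity_eq_negOnePow n _ hn0 h0, suTwoParity_eq_negOnePow n _ hn0 h1,
    Finset.prod_congr rfl (fun j hj => suTwoParity_eq_negOnePow n _ hn0 (h2 j hj)),
    e0, e1]
  rw [Finset.prod_congr rfl (fun j _ => by rw [ej j]), prod_negOnePow, ← hS]
  rw [← Units.val_mul, ← Units.val_mul, ← Int.negOnePow_add, ← Int.negOnePow_add]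
  have heven : Even (p + y + S) := by
    obtain ⟨t, ht⟩ := hdeven
    refine ⟨p * t + y, ?_⟩
    have h2e : 2 * (p + y + S) = 2 * ((p * t + y) + (p * t + y)) := by
      linear_combination hSval + 2 * p * ht
    linarith
  rw [Int.negOnePow_even _ heven, Units.val_one]
end

section
/- The only rational numbers f with 0 < f < n such that sin(πf/n) is a strictly positive rational number are f = n/2, f = n/6, and f = 5n/6 (with values 1, 1/2, 1/2 respectively). -/
/-!
By Niven's theorem, the only rational values of `sin` at rational multiples of `π` are
`0, ±1/2, ±1`. A positive value is therefore `1/2` or `1`, and on `(0, π)` these are taken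
exactly at `π/6, 5π/6` and at `π/2`.
-/

open Real Set

namespace Real

theorem sin_eq_sin_iff_of_mem_Icc {θ φ : ℝ} (hθ : θ ∈ Icc 0 π)
    (hφ : φ ∈ Icc 0 (π / 2)) :
    sin θ = sin φ ↔ θ = φ ∨ θ = π - φ := by
  have hφ' : φ ∈ Icc (-(π / 2)) (π / 2) := ⟨by linarith [hφ.1, pi_pos], hφ.2⟩
  constructor
  · intro h
    rcases le_total θ (π / 2) with hle | hge
    · exact .inl (injOn_sin ⟨by linarith [hθ.1], hle⟩ hφ' h)
    · have : π - θ = φ :=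
        injOn_sin ⟨by linarith [hθ.2], by linarith⟩ hφ' (by rw [sin_pi_sub, h])
      exact .inr (by linarith)
  · rintro (rfl | rfl)
    · rfl
    · exact sin_pi_sub φ

theorem sin_rat_mul_pi_eq_half_or_one {r : ℚ} (hq : ∃ q : ℚ, sin (r * π) = q)
    (hpos : 0 < sin (r * π)) : sin (r * π) = 1 / 2 ∨ sin (r * π) = 1 := by
  have h := niven_sin ⟨r, rfl⟩ hq
  simp only [mem_insert_iff, mem_singleton_iff] at h
  grind

theorem mul_pi_mem_Ioo {x : ℝ} (hx0 : 0 < x) (hx1 : x < 1) : x * π ∈ Ioo 0 π :=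
  ⟨by positivity, by nlinarith [pi_pos]⟩

theorem exists_rat_sin_rat_mul_pi_iff {x : ℚ} (hx0 : 0 < x) (hx1 : x < 1) :
    (∃ q : ℚ, sin (x * π) = q) ↔ x = 1 / 2 ∨ x = 1 / 6 ∨ x = 5 / 6 := by
  have hxπ := mul_pi_mem_Ioo (x := x) (mod_cast hx0) (mod_cast hx1)
  have cancel (c : ℚ) (h : (x : ℝ) * π = c * π) : x = c :=
    mod_cast (mul_right_cancel₀ pi_ne_zero h : (x : ℝ) = c)
  constructor
  · intro hq
    have hxπ' := Ioo_subset_Icc_self hxπ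
    rcases sin_rat_mul_pi_eq_half_or_one hq (sin_pos_of_pos_of_lt_pi hxπ.1 hxπ.2)
      with h | h
    · rw [← sin_pi_div_six,
        sin_eq_sin_iff_of_mem_Icc hxπ' ⟨by positivity, by linarith [pi_pos]⟩] at h
      rcases h with h | h
      · exact .inr (.inl (cancel _ (by rw [h]; push_cast; ring)))
      · exact .inr (.inr (cancel _ (by rw [h]; push_cast; ring)))
    · rw [← sin_pi_div_two, sin_eq_sin_iff_of_mem_Icc hxπ' ⟨by positivity, le_rfl⟩] at h
      exact .inl (cancel _ (by rcases h with h | h <;> rw [h] <;> push_cast <;> ring))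
  · rintro (rfl | rfl | rfl)
    · refine ⟨1, ?_⟩
      rw [show ((1 / 2 : ℚ) : ℝ) * π = π / 2 by push_cast; ring, sin_pi_div_two, Rat.cast_one]
    · refine ⟨1 / 2, ?_⟩
      rw [show ((1 / 6 : ℚ) : ℝ) * π = π / 6 by push_cast; ring, sin_pi_div_six]
      push_cast; rfl
    · refine ⟨1 / 2, ?_⟩
      rw [show ((5 / 6 : ℚ) : ℝ) * π = π - π / 6 by push_cast; ring, sin_pi_sub,
        sin_pi_div_six]
      push_cast; rfl

end Real

open Real in
theorem rational_sin_values_general (n : ℕ) (f : ℚ) (hf0 : 0 < f) (hfn : f < n) :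
    (∃ q : ℚ, 0 < q ∧ (q : ℝ) = Real.sin (π * (f : ℝ) / n)) ↔
      (f = n / 2 ∨ f = n / 6 ∨ f = 5 * n / 6) := by
  have hn : (0 : ℚ) < n := hf0.trans hfn
  have hx0 : 0 < f / n := div_pos hf0 hn
  have hx1 : f / n < 1 := (div_lt_one hn).mpr hfn
  have hangle := mul_pi_mem_Ioo (x := ((f / n : ℚ) : ℝ)) (mod_cast hx0) (mod_cast hx1)
  have hsin_pos := sin_pos_of_pos_of_lt_pi hangle.1 hangle.2
  rw [show π * (f : ℝ) / n = ((f / n : ℚ) : ℝ) * π by push_cast; ring]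
  calc (∃ q : ℚ, 0 < q ∧ (q : ℝ) = sin (((f / n : ℚ) : ℝ) * π))
      ↔ ∃ q : ℚ, sin (((f / n : ℚ) : ℝ) * π) = q :=
        ⟨fun ⟨q, _, hq⟩ ↦ ⟨q, hq.symm⟩,
          fun ⟨q, hq⟩ ↦ ⟨q, mod_cast (hq ▸ hsin_pos : (0 : ℝ) < q), hq.symm⟩⟩
    _ ↔ f / n = 1 / 2 ∨ f / n = 1 / 6 ∨ f / n = 5 / 6 := exists_rat_sin_rat_mul_pi_iff hx0 hx1
    _ ↔ f = n / 2 ∨ f = n / 6 ∨ f = 5 * n / 6 := by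
        rw [div_eq_iff hn.ne', div_eq_iff hn.ne', div_eq_iff hn.ne']
        ring_nf

open Real in
theorem rational_sin_values (n : ℕ) (hn : 0 < n) (f : ℚ) (hf0 : 0 < f) (hfn : f < n) :
    (∃ q : ℚ, 0 < q ∧ (q : ℝ) = Real.sin (π * (f : ℝ) / n)) ↔
      (f = n / 2 ∨ f = n / 6 ∨ f = 5 * n / 6) :=
  rational_sin_values_general n f hf0 hfn
end

section
/- For all integers h coprime to 15: ε_{15}(h)·ε_{15}(2h)·ε_{15}(5h)·ε_{15}(6h) = +1. -/
lemma suTwoParity_emod (a : ℤ) : suTwoParity 15 a = suTwoParity 15 (a % 30) := by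
  unfold suTwoParity
  have h1 : (15 : ℤ) ∣ a ↔ (15 : ℤ) ∣ a % 30 := by omega
  have h2 : a % (2 * 15) = a % 30 % (2 * 15) := by omega
  simp only [h1, h2]

theorem su3_height15_coupling (h : ℤ) (hh : IsCoprime h 15) :
    suTwoParity 15 h * suTwoParity 15 (2 * h) *
      suTwoParity 15 (5 * h) * suTwoParity 15 (6 * h) = 1 := by
  obtain ⟨u, v, huv⟩ := hh
  have h3 : ¬ (3 : ℤ) ∣ h := by
    intro hd
    have : (3 : ℤ) ∣ 1 := by
      rw [← huv]; exact dvd_add (hd.mul_left u) ((by norm_num : (3:ℤ) ∣ 15).mul_left v)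
    norm_num at this
  have h5 : ¬ (5 : ℤ) ∣ h := by
    intro hd
    have : (5 : ℤ) ∣ 1 := by
      rw [← huv]; exact dvd_add (hd.mul_left u) ((by norm_num : (5:ℤ) ∣ 15).mul_left v)
    norm_num at this
  rw [suTwoParity_emod h, suTwoParity_emod (2*h), suTwoParity_emod (5*h),
    suTwoParity_emod (6*h)]
  have e2 : (2*h) % 30 = (2 * (h % 30)) % 30 := by omega
  have e5 : (5*h) % 30 = (5 * (h % 30)) % 30 := by omega
  have e6 : (6*h) % 30 = (6 * (h % 30)) % 30 := by omega
  rw [e2, e5, e6]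
  have hr3 : ¬ (3 : ℤ) ∣ h % 30 := by omega
  have hr5 : ¬ (5 : ℤ) ∣ h % 30 := by omega
  have hb1 : 0 ≤ h % 30 := by omega
  have hb2 : h % 30 < 30 := by omega
  have key : ∀ r : ℤ, 0 ≤ r → r < 30 → ¬ (3:ℤ) ∣ r → ¬ (5:ℤ) ∣ r →
      suTwoParity 15 r * suTwoParity 15 (2 * r % 30) * suTwoParity 15 (5 * r % 30) *
        suTwoParity 15 (6 * r % 30) = 1 := by
    intro r h0 h1 hr3 hr5
    interval_cases r <;> revert hr3 hr5 <;> decide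
  exact key (h % 30) hb1 hb2 hr3 hr5
end

section
/- Let G be an abelian group acting on a set P, let A = {±1}^P be the group of functions P → {±1} with the induced G-action (σ·a)(j) = a(σ(j)), and let ε: G → A be a 1-cocycle (i.e., ε_{σσ'}(j) = ε_σ(σ'(j))·ε_{σ'}(j) for all σ, σ', j). If for all j ∈ P and all σ in the stabilizer G_j of j one has ε_σ(j) = 1, then ε is a 1-coboundary: there exists a ∈ A with ε_σ(j) = a(σ(j))/a(j) for all σ and j. Conversely, if ε is a coboundary, then ε_σ(j) = 1 whenever σ(j) = j. -/
/-- A 1-cocycle `ε : G → ({±1})^P` (values in `ℤˣ`) is a coboundary iff it is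
trivial on stabilizers. -/
theorem cocycle_coboundary_iff_trivial_on_stabilizers
    (G : Type*) [CommGroup G] (P : Type*) [MulAction G P]
    (ε : G → P → ℤˣ)
    (hcocycle : ∀ (σ σ' : G) (j : P), ε (σ * σ') j = ε σ (σ' • j) * ε σ' j) :
    (∀ (j : P) (σ : G), σ • j = j → ε σ j = 1) ↔
      (∃ a : P → ℤˣ, ∀ (σ : G) (j : P), ε σ j = a (σ • j) * (a j)⁻¹) := by
  constructor
  · intro hstab
    -- representative of the orbit of j
    let rep : P → P := fun j => (Quotient.mk (MulAction.orbitRel G P) j).out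
    have hrep : ∀ j : P, ∃ τ : G, τ • rep j = j := by
      intro j
      have h : (Quotient.mk (MulAction.orbitRel G P) j).out
          ∈ MulAction.orbit G j := Quotient.mk_out (s := MulAction.orbitRel G P) j
      obtain ⟨g, hg⟩ := h
      exact ⟨g⁻¹, by rw [show rep j = g • j from hg.symm, ← mul_smul, inv_mul_cancel, one_smul]⟩
    -- well-definedness
    have hwd : ∀ (j : P) (τ τ' : G), τ • rep j = τ' • rep j → ε τ (rep j) = ε τ' (rep j) := by
      intro j τ τ' h
      have hfix : (τ'⁻¹ * τ) • rep j = rep j := by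
        rw [mul_smul, h, ← mul_smul, inv_mul_cancel, one_smul]
      have := hcocycle τ' (τ'⁻¹ * τ) (rep j)
      rw [hfix, mul_inv_cancel_left, hstab (rep j) _ hfix, mul_one] at this
      exact this
    set a : P → ℤˣ := fun j => ε (Classical.choose (hrep j)) (rep j) with ha
    have haval : ∀ (j : P) (τ : G), τ • rep j = j → a j = ε τ (rep j) := by
      intro j τ hτ
      exact hwd j _ τ (by rw [Classical.choose_spec (hrep j), hτ])
    refine ⟨a, fun σ j => ?_⟩
    obtain ⟨τ, hτ⟩ := hrep j
    have hrepeq : rep (σ • j) = rep j := by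
      simp only [rep]
      congr 1
      exact Quotient.sound ⟨σ, rfl⟩
    have h1 : a j = ε τ (rep j) := haval j τ hτ
    have h2 : a (σ • j) = ε (σ * τ) (rep j) := by
      rw [haval (σ • j) (σ * τ) (by rw [hrepeq, mul_smul, hτ]), hrepeq]
    rw [h1, h2, hcocycle σ τ (rep j), hτ, mul_inv_cancel_right]
  · rintro ⟨a, ha⟩ j σ hσ
    rw [ha σ j, hσ, mul_inv_cancel]
end

section
/- Let G be an abelian group acting by permutations on a finite set P, A = {±1}^P with action (σ·a)(j) = a(σ(j)), and let ε ∈ Z¹(G,A) be a 1-cocycle. Then for each G-orbit O in P and each σ in the stabilizer G_O of O, the value ε_σ(j) is independent of j ∈ O (call it ε_σ(O)), and the map σ ↦ ε_σ(O) is a group homomorphism G_O → {±1}. Moreover the resulting map H¹(G,A) → ∏_O Hom(G_O, {±1}) is injective. -/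
/-- For a 1-cocycle `ε : G → ({±1})^P` of an abelian group `G` acting on a finite
set `P`: (a) on each orbit, `ε_σ` is constant for `σ` in the stabilizer of the
orbit; (b) `σ ↦ ε_σ(O)` is a homomorphism on the stabilizer; (c) the resulting
map `H¹(G, A) → ∏_O Hom(G_O, {±1})` is injective, i.e. two cocycles agreeing on
all stabilizers differ by a coboundary. -/
theorem cocycle_orbit_homomorphism_and_injectivity
    (G : Type*) [CommGroup G] (P : Type*) [Finite P] [MulAction G P]
    (ε ε' : G → P → ℤˣ)
    (hcocycle : ∀ (σ σ' : G) (j : P), ε (σ * σ') j = ε σ (σ' • j) * ε σ' j)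
    (hcocycle' : ∀ (σ σ' : G) (j : P), ε' (σ * σ') j = ε' σ (σ' • j) * ε' σ' j) :
    (∀ (σ : G) (j k : P), σ • j = j → k ∈ MulAction.orbit G j → ε σ j = ε σ k) ∧
    (∀ (σ σ' : G) (j : P), σ • j = j → σ' • j = j → ε (σ * σ') j = ε σ j * ε σ' j) ∧
    ((∀ (j : P) (σ : G), σ • j = j → ε σ j = ε' σ j) →
      ∃ a : P → ℤˣ, ∀ (σ : G) (j : P), ε σ j * (ε' σ j)⁻¹ = a (σ • j) * (a j)⁻¹) := by
  classical
  refine ⟨?_, ?_, ?_⟩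
  · intro σ j k hσ hk
    obtain ⟨τ, rfl⟩ := hk
    have h1 := hcocycle σ τ j
    have h2 := hcocycle τ σ j
    rw [mul_comm σ τ] at h1
    rw [hσ] at h2
    have h3 : ε σ (τ • j) * ε τ j = ε σ j * ε τ j := by
      rw [mul_comm (ε σ j)]; exact h1.symm.trans h2
    exact (mul_right_cancel h3).symm
  · intro σ σ' j hσ hσ'
    rw [hcocycle σ σ' j, hσ']
  · intro hagree
    set δ : G → P → ℤˣ := fun σ j => ε σ j * (ε' σ j)⁻¹ with hδ
    have hδc : ∀ (σ σ' : G) (j : P), δ (σ * σ') j = δ σ (σ' • j) * δ σ' j := by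
      intro σ σ' j
      simp only [hδ, hcocycle, hcocycle', mul_inv]
      exact mul_mul_mul_comm _ _ _ _
    have hδstab : ∀ (σ : G) (j : P), σ • j = j → δ σ j = 1 := by
      intro σ j h
      exact mul_inv_eq_one.mpr (hagree j σ h)
    have hwd : ∀ (r : P) (τ τ' : G), τ • r = τ' • r → δ τ r = δ τ' r := by
      intro r τ τ' h
      have hfix : (τ'⁻¹ * τ) • r = r := by rw [mul_smul, h, inv_smul_smul]
      have hc := hδc τ' (τ'⁻¹ * τ) r
      rw [mul_inv_cancel_left] at hc
      rw [hc, hfix, hδstab _ _ hfix, mul_one]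
    letI s := MulAction.orbitRel G P
    let rep : P → P := fun j => (Quotient.mk s j).out
    have hrep_ex : ∀ j : P, ∃ τ : G, τ • rep j = j := by
      intro j
      have h : rep j ∈ MulAction.orbit G j := Quotient.mk_out j
      obtain ⟨g, hg⟩ := h
      exact ⟨g⁻¹, by rw [← hg, inv_smul_smul]⟩
    choose τf hτf using hrep_ex
    have hrep_smul : ∀ (σ : G) (j : P), rep (σ • j) = rep j := by
      intro σ j
      have : Quotient.mk s (σ • j) = Quotient.mk s j :=
        Quotient.sound (MulAction.mem_orbit j σ)
      simp only [rep, this]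
    refine ⟨fun j => δ (τf j) (rep j), ?_⟩
    intro σ j
    have key : δ (τf (σ • j)) (rep (σ • j)) = δ σ j * δ (τf j) (rep j) := by
      rw [hrep_smul]
      have heq : τf (σ • j) • rep j = (σ * τf j) • rep j := by
        rw [mul_smul, hτf]
        have := hτf (σ • j)
        rw [hrep_smul] at this
        exact this
      rw [hwd _ _ _ heq, hδc, hτf]
    show δ σ j = δ (τf (σ • j)) (rep (σ • j)) * (δ (τf j) (rep j))⁻¹
    rw [key, mul_inv_cancel_right]
end

section
/- Let n > 1 and let θ be a character of (Z/nZ)* extended by zero to Z/nZ. Let x be an integer with gcd(x, n) = n/e and write x̃ = x/(n/e), coprime to e. If θ has conductor f, then (1/n)·∑_{h mod n} ⟨hx⟩_n · θ(h) equals 0 if f does not divide e, and equals (φ(n)/φ(e)) · B₁,θ^e · θ̄(x̃) if f divides e, where B₁,θ^e = (1/e)∑_{t=1}^{e} t·θ(t) is the generalized Bernoulli number and θ̄ is the complex conjugate character. -/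
/-- The generalized first Bernoulli number `B₁,θ = (1/N) ∑_{t=1}^{N} t·θ(t)`. -/
noncomputable def bernoulliOne (N : ℕ) (θ : DirichletCharacter ℂ N) : ℂ :=
  (N : ℂ)⁻¹ * ∑ t ∈ Finset.range N, (t : ℂ) * θ (t : ZMod N)

/-!
Write `x = d·x̃` with `d = n/e`. Then `⟨hx⟩_n = d·⟨hx̃⟩_e` depends only on `h mod e`, and the sum
becomes `d·∑_{u ∈ (ℤ/n)ˣ} F(u mod e)·θ(u)`. If `f ∤ e`, some `k ≡ 1 (mod e)` has `θ(k) ≠ 1`, and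
the substitution `u ↦ ku` shows that the sum is `θ(k)` times itself, hence zero. If `f ∣ e`, then
`θ(u)` only depends on `u mod e`; every unit mod `e` has `φ(n)/φ(e)` lifts, and the substitution
`t ↦ t·x̃⁻¹` in the remaining sum over `(ℤ/e)ˣ` turns it into `e·B₁,θ·θ̄(x̃)`.
-/

open Finset

theorem ZMod.sum_range_eq_sum_val {M : Type*} [AddCommMonoid M] (n : ℕ) [NeZero n]
    (f : ℕ → M) : ∑ h ∈ range n, f h = ∑ a : ZMod n, f a.val := by
  obtain ⟨k, rfl⟩ : ∃ k, n = k + 1 := Nat.exists_eq_succ_of_ne_zero (NeZero.ne n)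
  exact (Fin.sum_univ_eq_sum_range f _).symm

theorem Fintype.sum_units_eq_sum {M R : Type*} [Monoid M] [Fintype M] [Fintype Mˣ]
    [AddCommMonoid R] {f : M → R} (hf : ∀ a, ¬IsUnit a → f a = 0) :
    ∑ u : Mˣ, f u = ∑ a, f a :=
  Fintype.sum_of_injective _ Units.val_injective _ _ hf fun _ ↦ rfl

theorem MulChar.sum_units_mul_eq_sum {M R : Type*} [CommMonoid M] [Fintype M] [Fintype Mˣ]
    [CommRing R] (χ : MulChar M R) (f : M → R) :
    ∑ u : Mˣ, f u * χ u = ∑ a, f a * χ a :=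
  Fintype.sum_units_eq_sum (f := fun a ↦ f a * χ a) fun a ha ↦ by rw [χ.map_nonunit ha, mul_zero]

theorem MonoidHom.sum_mul_eq_zero_of_mul_left_invariant {G R : Type*} [Group G] [Fintype G]
    [CommRing R] [NoZeroDivisors R] (χ : G →* R) {f : G → R} {k : G}
    (hf : ∀ g, f (k * g) = f g) (hk : χ k ≠ 1) : ∑ g, f g * χ g = 0 := by
  have hfix : χ k * ∑ g, f g * χ g = ∑ g, f g * χ g := by
    rw [mul_sum]
    exact Fintype.sum_equiv (Equiv.mulLeft k) _ _ fun g ↦ by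
      simp only [Equiv.coe_mulLeft, hf, map_mul]; ring
  have : (χ k - 1) * ∑ g, f g * χ g = 0 := by rw [sub_mul, hfix, one_mul, sub_self]
  exact (mul_eq_zero.mp this).resolve_left (sub_ne_zero.mpr hk)

theorem MonoidHom.sum_comp_of_surjective {G H M : Type*} [Group G] [Group H] [Fintype G]
    [Fintype H] [AddCommMonoid M] {π : G →* H} (hπ : Function.Surjective π) (f : H → M) :
    ∑ g, f (π g) = Nat.card π.ker • ∑ h, f h := by
  classical
  rw [Finset.sum_comp, Finset.image_univ_of_surjective hπ, Finset.smul_sum]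
  refine Finset.sum_congr rfl fun h _ ↦ ?_
  rw [← Nat.card_congr (π.fiberEquivKerOfSurjective hπ h), Nat.card_eq_card_toFinset]
  simp

theorem Int.isCoprime_ediv_of_gcd_eq {x : ℤ} {n e : ℕ} (hn : n ≠ 0) (he : e ∣ n)
    (hgcd : x.gcd n = n / e) : IsCoprime (x / (n / e : ℕ)) e := by
  have h := Int.gcd_div_gcd_div_gcd (Int.gcd_pos_of_ne_zero_right x (Int.natCast_ne_zero.mpr hn))
  rw [hgcd, ← Int.natCast_div, Nat.div_div_self he hn] at h
  exact Int.isCoprime_iff_gcd_eq_one.mpr h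

namespace DirichletCharacter

variable {R : Type*} {n e : ℕ} (he : e ∣ n)

theorem exists_unitsMap_eq_one_apply_ne_one [NeZero n] [CommMonoidWithZero R]
    (θ : DirichletCharacter R n) (h : ¬θ.conductor ∣ e) :
    ∃ k : (ZMod n)ˣ, ZMod.unitsMap he k = 1 ∧ θ k ≠ 1 := by
  by_contra! hk
  refine h (θ.conductor_dvd_of_mem_conductorSet ?_)
  rw [mem_conductorSet_iff, factorsThrough_iff_ker_unitsMap he]
  exact fun k hk' ↦ Units.ext (hk k hk')

theorem apply_eq_changeLevel_primitiveCharacter [CommMonoidWithZero R]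
    (θ : DirichletCharacter R n) (hfe : θ.conductor ∣ e) (u : (ZMod n)ˣ) :
    θ u = changeLevel hfe θ.primitiveCharacter (ZMod.unitsMap he u) := by
  conv_lhs => rw [← θ.changeLevel_primitiveCharacter, changeLevel_trans _ hfe he]
  exact changeLevel_eq_cast_of_dvd _ he u

theorem sum_unitsMap_mul_eq_zero [NeZero n] [CommRing R] [NoZeroDivisors R]
    (θ : DirichletCharacter R n) (h : ¬θ.conductor ∣ e) (F : (ZMod e)ˣ → R) :
    ∑ u : (ZMod n)ˣ, F (ZMod.unitsMap he u) * θ u = 0 := by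
  obtain ⟨k, hk1, hθk⟩ := θ.exists_unitsMap_eq_one_apply_ne_one he h
  exact (θ.toMonoidHom.comp (Units.coeHom _)).sum_mul_eq_zero_of_mul_left_invariant
    (fun u ↦ by rw [map_mul, hk1, one_mul]) hθk

theorem sum_unitsMap_mul_eq [NeZero n] [NeZero e] [Field R] [CharZero R]
    (θ : DirichletCharacter R n) (hfe : θ.conductor ∣ e) (F : (ZMod e)ˣ → R) :
    ∑ u : (ZMod n)ˣ, F (ZMod.unitsMap he u) * θ u =
      (n.totient / e.totient : R) *
        ∑ t : (ZMod e)ˣ, F t * changeLevel hfe θ.primitiveCharacter t := by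
  have hsurj := ZMod.unitsMap_surjective (m := n) he
  have hcard : (n.totient : R) = Nat.card (ZMod.unitsMap he).ker * e.totient := by
    simpa [ZMod.card_units_eq_totient] using
      congrArg (Nat.cast : ℕ → R) (MonoidHom.sum_comp_of_surjective hsurj fun _ ↦ 1)
  have he' : (e.totient : R) ≠ 0 := by simp [NeZero.ne e]
  simp_rw [θ.apply_eq_changeLevel_primitiveCharacter he hfe]
  rw [MonoidHom.sum_comp_of_surjective hsurj
    (fun t ↦ F t * changeLevel hfe θ.primitiveCharacter t), hcard, nsmul_eq_mul,
    mul_div_cancel_right₀ _ he']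

theorem sum_range_emod_mul_eq_sum_units [NeZero n] [CommRing R] (θ : DirichletCharacter R n)
    {y : ℤ} {u : (ZMod e)ˣ} (hu : (y : ZMod e) = u) :
    ∑ h ∈ range n, (((h * ((n / e : ℕ) * y)) % n : ℤ) : R) * θ h =
      (n / e : ℕ) *
        ∑ v : (ZMod n)ˣ, (((ZMod.unitsMap he v * u : (ZMod e)ˣ) : ZMod e).val : R) * θ v := by
  have : NeZero e := ⟨ne_zero_of_dvd_ne_zero (NeZero.ne n) he⟩
  have hd : 0 < n / e := Nat.div_pos (Nat.le_of_dvd (Nat.pos_of_neZero n) he) (Nat.pos_of_neZero e)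
  have hn : (n : ℤ) = (n / e : ℕ) * e := by exact_mod_cast (Nat.div_mul_cancel he).symm
  simp only [ZMod.sum_range_eq_sum_val, ZMod.natCast_zmod_val]
  rw [← θ.sum_units_mul_eq_sum, mul_sum]
  refine sum_congr rfl fun v _ ↦ ?_
  have hres : ((v : ZMod n).val * ((n / e : ℕ) * y)) % (n : ℤ) =
      (n / e : ℕ) * ((ZMod.unitsMap he v * u : (ZMod e)ˣ) : ZMod e).val := by
    rw [hn, mul_left_comm, Int.mul_emod_mul_of_pos _ _ (by exact_mod_cast hd), ← ZMod.val_intCast,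
      Int.cast_mul, Int.cast_natCast, hu, ZMod.natCast_val (R := ZMod e)]
    rfl
  rw [hres, Int.cast_mul, Int.cast_natCast, Int.cast_natCast, mul_assoc]

end DirichletCharacter

theorem natCast_mul_bernoulliOne {N : ℕ} [NeZero N] (θ : DirichletCharacter ℂ N) :
    N * bernoulliOne N θ = ∑ a : ZMod N, (a.val : ℂ) * θ a := by
  rw [bernoulliOne, mul_inv_cancel_left₀ (NeZero.ne (N : ℂ)), ZMod.sum_range_eq_sum_val]
  simp only [ZMod.natCast_zmod_val]

theorem sum_units_val_mul_right_mul_eq_bernoulliOne {N : ℕ} [NeZero N]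
    (θ : DirichletCharacter ℂ N) (u : (ZMod N)ˣ) :
    ∑ t : (ZMod N)ˣ, (((t * u : (ZMod N)ˣ) : ZMod N).val : ℂ) * θ t =
      N * bernoulliOne N θ * starRingEnd ℂ (θ u) := by
  have hconj : starRingEnd ℂ (θ u) = θ ↑u⁻¹ := by
    rw [starRingEnd_apply, MulChar.star_apply', MulChar.inv_apply, Ring.inverse_unit]
  rw [hconj, natCast_mul_bernoulliOne, ← θ.sum_units_mul_eq_sum, sum_mul]
  refine (Fintype.sum_equiv (Equiv.mulRight u⁻¹) _ _ fun s ↦ ?_).symm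
  simp only [Equiv.coe_mulRight, Units.val_mul, map_mul, mul_assoc, Units.inv_mul, mul_one]

theorem residue_sum_eq_bernoulli_general_general (n : ℕ) (hn : 1 < n)
    (θ : DirichletCharacter ℂ n) (x : ℤ) (e : ℕ) (he : e ∣ n)
    (hgcd : Int.gcd x (n : ℤ) = n / e) :
    ((¬ θ.conductor ∣ e →
      (n : ℂ)⁻¹ * ∑ h ∈ Finset.range n, (((h * x) % (n : ℤ) : ℤ) : ℂ) * θ (h : ZMod n) = 0) ∧
    (∀ hfe : θ.conductor ∣ e,
      (n : ℂ)⁻¹ * ∑ h ∈ Finset.range n, (((h * x) % (n : ℤ) : ℤ) : ℂ) * θ (h : ZMod n) =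
        ((Nat.totient n : ℂ) / (Nat.totient e : ℂ)) *
          bernoulliOne e (DirichletCharacter.changeLevel hfe θ.primitiveCharacter) *
          (starRingEnd ℂ)
            ((DirichletCharacter.changeLevel hfe θ.primitiveCharacter)
              ((x / ((n : ℤ) / (e : ℤ))) : ZMod e)))) := by
  have : NeZero n := ⟨by omega⟩
  have : NeZero e := ⟨ne_zero_of_dvd_ne_zero (NeZero.ne n) he⟩
  have hx : x = (n / e : ℕ) * (x / (n / e : ℕ)) :=
    (Int.mul_ediv_cancel' (hgcd ▸ Int.gcd_dvd_left x n)).symm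
  set u := ZMod.unitOfIsCoprime _ (Int.isCoprime_ediv_of_gcd_eq (NeZero.ne n) he hgcd)
  have hu : ((x / (n / e : ℕ) : ℤ) : ZMod e) = u := (ZMod.coe_unitOfIsCoprime _ _).symm
  have hsum := θ.sum_range_emod_mul_eq_sum_units he hu
  rw [← hx] at hsum
  rw [hsum, ← Int.natCast_div, hu]
  set F : (ZMod e)ˣ → ℂ := fun t ↦ (((t * u : (ZMod e)ˣ) : ZMod e).val : ℂ)
  refine ⟨fun hf ↦ by rw [θ.sum_unitsMap_mul_eq_zero he hf F, mul_zero, mul_zero], fun hfe ↦ ?_⟩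
  rw [θ.sum_unitsMap_mul_eq he hfe F, sum_units_val_mul_right_mul_eq_bernoulliOne]
  have hn' : (n : ℂ) = (n / e : ℕ) * e := by exact_mod_cast (Nat.div_mul_cancel he).symm
  have hd : ((n / e : ℕ) : ℂ) ≠ 0 :=
    Nat.cast_ne_zero.mpr ((Nat.div_ne_zero_iff_of_dvd he).mpr ⟨NeZero.ne n, NeZero.ne e⟩)
  have he' : (e : ℂ) ≠ 0 := NeZero.ne _
  rw [hn']
  field_simp

theorem residue_sum_eq_bernoulli_general (n : ℕ) (hn : 1 < n)
    (θ : DirichletCharacter ℂ n) (x : ℤ) (e : ℕ) (he : e ∣ n) (hepos : 0 < e)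
    (hgcd : Int.gcd x (n : ℤ) = n / e) :
    ((¬ θ.conductor ∣ e →
      (n : ℂ)⁻¹ * ∑ h ∈ Finset.range n, (((h * x) % (n : ℤ) : ℤ) : ℂ) * θ (h : ZMod n) = 0) ∧
    (∀ hfe : θ.conductor ∣ e,
      (n : ℂ)⁻¹ * ∑ h ∈ Finset.range n, (((h * x) % (n : ℤ) : ℤ) : ℂ) * θ (h : ZMod n) =
        ((Nat.totient n : ℂ) / (Nat.totient e : ℂ)) *
          bernoulliOne e (DirichletCharacter.changeLevel hfe θ.primitiveCharacter) *
          (starRingEnd ℂ)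
            ((DirichletCharacter.changeLevel hfe θ.primitiveCharacter)
              ((x / ((n : ℤ) / (e : ℤ))) : ZMod e)))) :=
  residue_sum_eq_bernoulli_general_general n hn θ x e he hgcd
end
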